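/- arXiv:1801.04977 — 2 statements merged into one kernel-verified Lean document; each statement's English description precedes it below -/
import Mathlib

section
/- Suppose the matrix A is real (b_0, b_1, c_{-1}, c_0 ∈ ℝ) and t_k ∈ ℝ is a phase root, i.e., e^{2int_k} = e^{iΨ(t_k)} where Ψ is a continuous argument of g(e^{it}) and g(z) = p(z)/(z^4 p(1/z)) with p(z) = (b_1 z^2 + b_0 z + 1)(c_{-1} z^2 + c_0 z + 1). Then e^{it_k} is an exact root of H(z) = z^{2n} p_rev(z) - p(z), where p_rev(z) = z^4 p(1/z). -/
/-! On the unit circle `z⁻¹ = conj z`, so for `p` with real coefficients the reversal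
`z ^ 4 * p z⁻¹ = z ^ 4 * conj (p z)` has the same modulus as `p z`. Hence `g = p / prev` is unimodular
there and equals its phase factor `exp (i Ψ)`; a phase root `z ^ (2n) = exp (i Ψ)` then gives
`z ^ (2n) * prev z = p z`. -/

open Complex

lemma Complex.norm_pow_mul_apply_inv_of_conj {f : ℂ → ℂ}
    (hf : ∀ w, f (starRingEnd ℂ w) = starRingEnd ℂ (f w)) {z : ℂ} (hz : ‖z‖ = 1) (k : ℕ) :
    ‖z ^ k * f z⁻¹‖ = ‖f z‖ := by
  rw [Complex.inv_eq_conj hz, hf, norm_mul, norm_pow, hz, one_pow, one_mul, Complex.norm_conj]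

lemma Complex.mul_sub_eq_zero_of_div_eq_polar {a b c u : ℂ} (hab : ‖a‖ = ‖b‖)
    (hpolar : a / b = (‖a / b‖ : ℂ) * u) (hc : c = u) : c * b - a = 0 := by
  rcases eq_or_ne b 0 with rfl | hb
  · rw [norm_zero, norm_eq_zero] at hab
    simp [hab]
  · have hunit : ‖a / b‖ = 1 := by rw [norm_div, hab, div_self (norm_ne_zero_iff.mpr hb)]
    rw [hunit, ofReal_one, one_mul, ← hc] at hpolar
    rw [← hpolar, div_mul_cancel₀ a hb, sub_self]

theorem stmt_9_general (n : ℕ) (b0 b1 cm1 c0 : ℝ)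
    (p prev g : ℂ → ℂ)
    (hp : ∀ z : ℂ, p z = ((b1 : ℂ) * z ^ 2 + (b0 : ℂ) * z + 1) *
      ((cm1 : ℂ) * z ^ 2 + (c0 : ℂ) * z + 1))
    (hprev : ∀ z : ℂ, prev z = z ^ 4 * p z⁻¹)
    (hg : ∀ z : ℂ, g z = p z / prev z)
    (Ψ : ℝ → ℝ)
    (hΨ : ∀ s : ℝ, g (Complex.exp ((s : ℂ) * I)) =
      (‖g (Complex.exp ((s : ℂ) * I))‖ : ℂ) *
        Complex.exp ((Ψ s : ℂ) * I))
    (t : ℝ)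
    (hphase : Complex.exp ((2 * n * t : ℂ) * I) = Complex.exp ((Ψ t : ℂ) * I)) :
    (Complex.exp ((t : ℂ) * I)) ^ (2 * n) * prev (Complex.exp ((t : ℂ) * I)) -
      p (Complex.exp ((t : ℂ) * I)) = 0 := by
  have hp_conj : ∀ w, p (starRingEnd ℂ w) = starRingEnd ℂ (p w) := fun w => by
    simp only [hp, map_mul, map_add, map_pow, map_one, conj_ofReal]
  have hnorm : ‖p (exp (t * I))‖ = ‖prev (exp (t * I))‖ := by
    rw [hprev, norm_pow_mul_apply_inv_of_conj hp_conj (norm_exp_ofReal_mul_I t)]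
  have hpow : exp (t * I) ^ (2 * n) = exp ((2 * n * t : ℂ) * I) := by
    rw [← exp_nat_mul]
    push_cast
    ring_nf
  refine mul_sub_eq_zero_of_div_eq_polar hnorm ?_ (hpow.trans hphase)
  simpa only [hg] using hΨ t

theorem stmt_9 (n : ℕ) (hn : 0 < n) (b0 b1 cm1 c0 : ℝ)
    (p prev g : ℂ → ℂ)
    (hp : ∀ z : ℂ, p z = ((b1 : ℂ) * z ^ 2 + (b0 : ℂ) * z + 1) *
      ((cm1 : ℂ) * z ^ 2 + (c0 : ℂ) * z + 1))
    (hprev : ∀ z : ℂ, prev z = z ^ 4 * p z⁻¹)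
    (hg : ∀ z : ℂ, g z = p z / prev z)
    (hcirc : ∀ z : ℂ, ‖z‖ = 1 → p z ≠ 0 ∧ prev z ≠ 0)
    (Ψ : ℝ → ℝ)
    (hΨ : ∀ s : ℝ, g (Complex.exp ((s : ℂ) * I)) =
      (‖g (Complex.exp ((s : ℂ) * I))‖ : ℂ) *
        Complex.exp ((Ψ s : ℂ) * I))
    (t : ℝ)
    (hphase : Complex.exp ((2 * n * t : ℂ) * I) = Complex.exp ((Ψ t : ℂ) * I)) :
    (Complex.exp ((t : ℂ) * I)) ^ (2 * n) * prev (Complex.exp ((t : ℂ) * I)) -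
      p (Complex.exp ((t : ℂ) * I)) = 0 :=
  stmt_9_general n b0 b1 cm1 c0 p prev g hp hprev hg Ψ hΨ t hphase
end

section
/- Let g be holomorphic on a neighborhood of a point z_0 inside the open unit disc with g(z_0) = 0 of multiplicity m, and fix ρ with |z_0| < ρ < 1. Then there is a constant M > 0 such that for all sufficiently large n, the disc of radius ε = M^{-1/m} ρ^{2n/m} centered at z_0 contains exactly m roots (with multiplicity) of the equation z^{2n} = g(z). -/
/-!
Write `g = (z - z₀)ᵐ h` with `h z₀ ≠ 0`. If `z₀ ≠ 0`, choose on a small disc around `z₀`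
holomorphic branches of `log z` and `log h` and put `Aₙ = exp ((2n log z - log h) / m)`, so that
`Aₙᵐ = z²ⁿ / h` and `z²ⁿ - g = -h ∏_{μᵐ = 1} (z - (z₀ + μ Aₙ z))`. With `‖z₀‖ < ρ' < ρ` we get
`‖Aₙ‖ ≲ ρ'^(2n/m)`, which for large `n` is much smaller than `εₙ = ρ^(2n/m)`; by the Cauchy
estimate each map `z ↦ z₀ + μ Aₙ z` is then a contraction of `closedBall z₀ εₙ` into itself, so
each factor has exactly one zero there, a simple one, and these `m` zeros are distinct because
`Aₙ` does not vanish. If `z₀ = 0` then `z²ⁿ - g = zᵐ (z^(2n-m) - h)` and the second factor has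
no zero near `0`. In both cases `M = 1` works.
-/

open Complex Metric Filter Topology Set Function
open scoped NNReal

def HasZeroCountOn (F : ℂ → ℂ) (K : Set ℂ) (m : ℕ) : Prop :=
  ∃ (S : Finset ℂ) (mult : ℂ → ℕ), (∀ z ∈ S, z ∈ K) ∧ (∀ z ∈ K, F z = 0 ↔ z ∈ S) ∧
    (∀ z ∈ S, 0 < mult z ∧ ∃ u : ℂ → ℂ, AnalyticAt ℂ u z ∧ u z ≠ 0 ∧
      ∀ᶠ w in 𝓝 z, F w = (w - z) ^ mult z * u w) ∧
    ∑ z ∈ S, mult z = m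

theorem hasZeroCountOn_of_analyticOrderAt {F : ℂ → ℂ} {K : Set ℂ} {m : ℕ} (S : Finset ℂ)
    (mult : ℂ → ℕ) (hSK : ∀ z ∈ S, z ∈ K) (hzero : ∀ z ∈ K, F z = 0 ↔ z ∈ S)
    (hF : ∀ z ∈ S, AnalyticAt ℂ F z) (hord : ∀ z ∈ S, analyticOrderAt F z = mult z)
    (hsum : ∑ z ∈ S, mult z = m) : HasZeroCountOn F K m := by
  refine ⟨S, mult, hSK, hzero, fun z hz => ⟨Nat.pos_of_ne_zero fun h0 => ?_, ?_⟩, hsum⟩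
  · have hord0 : analyticOrderAt F z = 0 := by rw [hord z hz, h0, Nat.cast_zero]
    rw [analyticOrderAt_eq_zero] at hord0
    exact hord0.resolve_left (not_not.mpr (hF z hz)) ((hzero z (hSK z hz)).mpr hz)
  · simpa only [smul_eq_mul] using ((hF z hz).analyticOrderAt_eq_natCast).mp (hord z hz)

theorem hasZeroCountOn_of_eq_pow_mul {F v : ℂ → ℂ} {c : ℂ} {ε R : ℝ} {m : ℕ} (hm : 0 < m)
    (hε : 0 ≤ ε) (hεR : ε < R) (hF : ∀ z ∈ ball c R, F z = (z - c) ^ m * v z)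
    (hv : AnalyticAt ℂ v c) (hv0 : ∀ z ∈ closedBall c ε, v z ≠ 0) :
    HasZeroCountOn F (closedBall c ε) m := by
  have hK : closedBall c ε ⊆ ball c R := closedBall_subset_ball hεR
  refine ⟨{c}, fun _ => m, by simpa using hε, fun z hz => ?_, fun z hz => ?_, by simp⟩
  · rw [hF z (hK hz), mul_eq_zero, or_iff_left (hv0 z hz), pow_eq_zero_iff hm.ne', sub_eq_zero,
      Finset.mem_singleton]
  · rw [Finset.mem_singleton] at hz
    subst hz
    exact ⟨hm, v, hv, hv0 z (mem_closedBall_self hε),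
      eventually_of_mem (isOpen_ball.mem_nhds (mem_ball_self (hε.trans_lt hεR))) hF⟩

theorem analyticOrderAt_mul_eq_one_of_deriv_ne_zero {v f : ℂ → ℂ} {a : ℂ} (hv : AnalyticAt ℂ v a)
    (hva : v a ≠ 0) (hf : AnalyticAt ℂ f a) (hfa : f a = 0) (hf' : deriv f a ≠ 0) :
    analyticOrderAt (v * f) a = 1 := by
  rw [analyticOrderAt_mul hv hf, analyticOrderAt_eq_zero.mpr (Or.inr hva),
    hf.analyticOrderAt_eq_one_of_zero_deriv_ne_zero hfa hf', zero_add]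

theorem hasZeroCountOn_mul_prod {ι : Type*} [DecidableEq ι] {F u : ℂ → ℂ} {f : ι → ℂ → ℂ}
    {Z : Finset ι} {p : ι → ℂ} {U K : Set ℂ} (hU : IsOpen U) (hKU : K ⊆ U)
    (hF : ∀ z ∈ U, F z = u z * ∏ i ∈ Z, f i z)
    (hu : AnalyticOnNhd ℂ u U) (hu0 : ∀ z ∈ U, u z ≠ 0) (hf : ∀ i ∈ Z, AnalyticOnNhd ℂ (f i) U)
    (hpK : ∀ i ∈ Z, p i ∈ K) (hfzero : ∀ i ∈ Z, ∀ z ∈ K, f i z = 0 ↔ p i = z)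
    (hf' : ∀ i ∈ Z, deriv (f i) (p i) ≠ 0) (hinj : InjOn p Z) :
    HasZeroCountOn F K Z.card := by
  have hsimple : ∀ i ∈ Z, AnalyticAt ℂ F (p i) ∧ analyticOrderAt F (p i) = 1 := by
    intro i hi
    have hpU := hKU (hpK i hi)
    set v := fun z => u z * ∏ j ∈ Z.erase i, f j z
    have hev : F =ᶠ[𝓝 (p i)] v * f i := by
      filter_upwards [hU.mem_nhds hpU] with z hz
      rw [hF z hz, ← Finset.mul_prod_erase Z _ hi, Pi.mul_apply]
      ring
    have hv : AnalyticAt ℂ v (p i) := (hu _ hpU).mul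
      (Finset.analyticAt_fun_prod _ fun j hj => hf j (Finset.mem_of_mem_erase hj) _ hpU)
    have hva : v (p i) ≠ 0 := by
      refine mul_ne_zero (hu0 _ hpU) (Finset.prod_ne_zero_iff.mpr fun j hj hzero => ?_)
      obtain ⟨hji, hjZ⟩ := Finset.mem_erase.mp hj
      exact hji (hinj hjZ hi ((hfzero j hjZ _ (hpK i hi)).mp hzero))
    have hfi := hf i hi _ hpU
    exact ⟨(hv.mul hfi).congr hev.symm, (analyticOrderAt_congr hev).trans
      (analyticOrderAt_mul_eq_one_of_deriv_ne_zero hv hva hfi ((hfzero i hi _ (hpK i hi)).mpr rfl)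
        (hf' i hi))⟩
  refine hasZeroCountOn_of_analyticOrderAt (Z.image p) (fun _ => 1) ?_ ?_ ?_ ?_ ?_
  · simpa using hpK
  · intro z hz
    rw [hF z (hKU hz), mul_eq_zero, or_iff_right (hu0 z (hKU hz)), Finset.prod_eq_zero_iff,
      Finset.mem_image]
    exact exists_congr fun i => and_congr_right fun hi => hfzero i hi z hz
  · simpa using fun i hi => (hsimple i hi).1
  · simpa using fun i hi => (hsimple i hi).2
  · rw [Finset.sum_const, smul_eq_mul, mul_one, Finset.card_image_of_injOn hinj]

theorem LipschitzOnWith.existsUnique_isFixedPt {α : Type*} [MetricSpace α] {f : α → α}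
    {s : Set α} {K : ℝ≥0} (hf : LipschitzOnWith K f s) (hK : K < 1) (hs : IsComplete s)
    (hne : s.Nonempty) (hsf : MapsTo f s s) :
    ∃! x, x ∈ s ∧ IsFixedPt f x := by
  obtain ⟨x, hx⟩ := hne
  obtain ⟨y, hys, hy, -⟩ := ContractingWith.exists_fixedPoint' hs hsf
    ⟨hK, hf.mapsToRestrict hsf⟩ hx (edist_ne_top _ _)
  refine ⟨y, ⟨hys, hy⟩, fun z ⟨hzs, hz⟩ => dist_le_zero.mp ?_⟩
  have hle := hf.dist_le_mul z hzs y hys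
  rw [hz.eq, hy.eq] at hle
  have hK' : (K : ℝ) < 1 := hK
  nlinarith [dist_nonneg (x := z) (y := y)]

theorem norm_deriv_le_of_forall_norm_le {E : Type*} [NormedAddCommGroup E] [NormedSpace ℂ E]
    {f : ℂ → E} {z : ℂ} {r a : ℝ} (hr : 0 < r) (hf : DifferentiableOn ℂ f (ball z r))
    (hfa : ∀ w ∈ ball z r, ‖f w‖ ≤ a) : ‖deriv f z‖ ≤ 2 * a / r := by
  refine Complex.norm_deriv_le_div_of_mapsTo_ball hf (fun w hw => ?_) hr
  rw [mem_closedBall, dist_eq_norm, two_mul]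
  exact (norm_sub_le _ _).trans (add_le_add (hfa w hw) (hfa z (mem_ball_self hr)))

section SmallPerturbation

variable {A : ℂ → ℂ} {c : ℂ} {ε : ℝ}

theorem existsUnique_isFixedPt_const_add_mul {μ : ℂ} (hμ : ‖μ‖ = 1) (hε : 0 ≤ ε)
    (hA : ∀ z ∈ closedBall c ε, DifferentiableAt ℂ A z)
    (hAε : ∀ z ∈ closedBall c ε, ‖A z‖ ≤ ε) (hA' : ∀ z ∈ closedBall c ε, ‖deriv A z‖ ≤ 1 / 2) :
    ∃! p, p ∈ closedBall c ε ∧ IsFixedPt (fun z => c + μ * A z) p := by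
  have hlip : LipschitzOnWith (1 / 2) (fun z => c + μ * A z) (closedBall c ε) := by
    refine (convex_closedBall c ε).lipschitzOnWith_of_nnnorm_deriv_le
      (fun z hz => ((hA z hz).const_mul μ).const_add c) fun z hz => ?_
    rw [← NNReal.coe_le_coe, coe_nnnorm, deriv_const_add, deriv_const_mul _ (hA z hz),
      norm_mul, hμ, one_mul]
    simpa using hA' z hz
  refine hlip.existsUnique_isFixedPt (by norm_num) isClosed_closedBall.isComplete
    ⟨c, mem_closedBall_self hε⟩ fun z hz => ?_
  rw [mem_closedBall, dist_eq_norm, add_sub_cancel_left, norm_mul, hμ, one_mul]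
  exact hAε z hz

theorem hasZeroCountOn_mul_sub_pow_sub_pow {F u : ℂ → ℂ} {R : ℝ} {m : ℕ} (hm : 0 < m)
    (hε : 0 ≤ ε) (hεR : ε < R)
    (hF : ∀ z ∈ ball c R, F z = u z * ((z - c) ^ m - A z ^ m))
    (hu : AnalyticOnNhd ℂ u (ball c R)) (hu0 : ∀ z ∈ ball c R, u z ≠ 0)
    (hA : AnalyticOnNhd ℂ A (ball c R)) (hA0 : ∀ z ∈ ball c R, A z ≠ 0)
    (hAε : ∀ z ∈ closedBall c ε, ‖A z‖ ≤ ε) (hA' : ∀ z ∈ closedBall c ε, ‖deriv A z‖ ≤ 1 / 2) :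
    HasZeroCountOn F (closedBall c ε) m := by
  have hKR : closedBall c ε ⊆ ball c R := closedBall_subset_ball hεR
  have hζ := Complex.isPrimitiveRoot_exp m hm.ne'
  set Z := Polynomial.nthRootsFinset m (1 : ℂ)
  have hZ : ∀ μ ∈ Z, ‖μ‖ = 1 := fun μ hμ =>
    norm_eq_one_of_pow_eq_one ((Polynomial.mem_nthRootsFinset hm 1).mp hμ) hm.ne'
  have hfix : ∀ μ ∈ Z, ∃! p, p ∈ closedBall c ε ∧ IsFixedPt (fun z => c + μ * A z) p :=
    fun μ hμ => existsUnique_isFixedPt_const_add_mul (hZ μ hμ) hε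
      (fun z hz => (hA z (hKR hz)).differentiableAt) hAε hA'
  choose! p hp hpuniq using hfix
  have hfzero : ∀ μ ∈ Z, ∀ z ∈ closedBall c ε, z - (c + μ * A z) = 0 ↔ p μ = z :=
    fun μ hμ z hz => ⟨fun h => (hpuniq μ hμ z ⟨hz, (sub_eq_zero.mp h).symm⟩).symm,
      fun h => sub_eq_zero.mpr (h ▸ (hp μ hμ).2.symm)⟩
  rw [← hζ.card_nthRootsFinset]
  refine hasZeroCountOn_mul_prod (f := fun μ z => z - (c + μ * A z)) isOpen_ball hKR
    (fun z hz => ?_) hu hu0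
    (fun μ _ => analyticOnNhd_id.sub (analyticOnNhd_const.add (analyticOnNhd_const.mul hA)))
    (fun μ hμ => (hp μ hμ).1) hfzero (fun μ hμ => ?_) ?_
  · simp_rw [hF z hz, hζ.pow_sub_pow_eq_prod_sub_mul _ _ hm, sub_add_eq_sub_sub]
  · have hpR := hKR (hp μ hμ).1
    have hd : HasDerivAt (fun z => z - (c + μ * A z)) (1 - μ * deriv A (p μ)) (p μ) :=
      (hasDerivAt_id _).sub (((hA _ hpR).differentiableAt.hasDerivAt.const_mul μ).const_add c)
    rw [hd.deriv, sub_ne_zero]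
    intro h
    have hsmall : ‖μ * deriv A (p μ)‖ ≤ 1 / 2 := by
      rw [norm_mul, hZ μ hμ, one_mul]
      exact hA' _ (hp μ hμ).1
    rw [← h, norm_one] at hsmall
    norm_num at hsmall
  · intro μ hμ ν hν h
    have e : μ * A (p μ) = ν * A (p μ) := by
      have e := (hp μ hμ).2.eq.trans (h.trans (hp ν hν).2.eq.symm)
      rw [← h] at e
      exact add_left_cancel e
    exact mul_right_cancel₀ (hA0 _ (hKR (hp μ hμ).1)) e

/-- The radius `5 * ε` leaves room for Cauchy estimates of `deriv A` on discs of radius `4 * ε`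
around the points of `closedBall c ε`. -/
theorem hasZeroCountOn_mul_sub_pow_sub_pow_of_norm_le {F u : ℂ → ℂ} {m : ℕ} (hm : 0 < m)
    (hε : 0 < ε) (hF : ∀ z ∈ ball c (5 * ε), F z = u z * ((z - c) ^ m - A z ^ m))
    (hu : AnalyticOnNhd ℂ u (ball c (5 * ε))) (hu0 : ∀ z ∈ ball c (5 * ε), u z ≠ 0)
    (hA : AnalyticOnNhd ℂ A (ball c (5 * ε))) (hA0 : ∀ z ∈ ball c (5 * ε), A z ≠ 0)
    (hAε : ∀ z ∈ ball c (5 * ε), ‖A z‖ ≤ ε) :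
    HasZeroCountOn F (closedBall c ε) m := by
  have hK : closedBall c ε ⊆ ball c (5 * ε) := closedBall_subset_ball (by linarith)
  refine hasZeroCountOn_mul_sub_pow_sub_pow hm hε.le (by linarith) hF hu hu0 hA hA0
    (fun z hz => hAε z (hK hz)) fun z hz => ?_
  have hsub : ball z (4 * ε) ⊆ ball c (5 * ε) :=
    ball_subset_ball' (by rw [mem_closedBall] at hz; linarith)
  calc ‖deriv A z‖ ≤ 2 * ε / (4 * ε) := norm_deriv_le_of_forall_norm_le (by positivity)
        (hA.differentiableOn.mono hsub) fun w hw => hAε w (hsub hw)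
    _ = 1 / 2 := by field_simp; norm_num

end SmallPerturbation

theorem exists_analyticOnNhd_cexp_eq {f : ℂ → ℂ} {s : Set ℂ} {c : ℂ} (hf : AnalyticOnNhd ℂ f s)
    (hslit : ∀ z ∈ s, f z / f c ∈ slitPlane) :
    ∃ L : ℂ → ℂ, AnalyticOnNhd ℂ L s ∧ ∀ z ∈ s, cexp (L z) = f z := by
  have hc : ∀ z ∈ s, f c ≠ 0 := fun z hz hc => by simpa [hc] using hslit z hz
  refine ⟨fun z => log (f c) + log (f z / f c), fun z hz => ?_, fun z hz => ?_⟩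
  · exact analyticAt_const.add (((hf z hz).div analyticAt_const (hc z hz)).clog (hslit z hz))
  · rw [exp_add, exp_log (hc z hz), exp_log (slitPlane_ne_zero (hslit z hz)),
      mul_div_cancel₀ _ (hc z hz)]

theorem rpow_two_mul_div_pow {ρ : ℝ} (hρ : 0 ≤ ρ) {m : ℕ} (hm : m ≠ 0) (n : ℕ) :
    (ρ ^ ((2 * n : ℝ) / m)) ^ m = ρ ^ (2 * n) := by
  rw [← Real.rpow_natCast, ← Real.rpow_mul hρ, div_mul_cancel₀ _ (Nat.cast_ne_zero.mpr hm)]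
  norm_cast

theorem tendsto_rpow_two_mul_div {ρ : ℝ} (hρ0 : 0 ≤ ρ) (hρ1 : ρ < 1) {m : ℕ} (hm : 0 < m) :
    Tendsto (fun n : ℕ => ρ ^ ((2 * n : ℝ) / m)) atTop (𝓝 0) := by
  have hpow : (fun n : ℕ => ρ ^ ((2 * n : ℝ) / m)) = fun n => (ρ ^ ((2 : ℝ) / m)) ^ n := by
    ext n
    rw [← Real.rpow_natCast, ← Real.rpow_mul hρ0]
    ring_nf
  rw [hpow]
  exact tendsto_pow_atTop_nhds_zero_of_lt_one (by positivity)
    (Real.rpow_lt_one hρ0 hρ1 (by positivity))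

theorem eventually_pow_le_mul_pow {a b C : ℝ} (ha : 0 ≤ a) (hab : a < b) (hC : 0 < C) :
    ∀ᶠ n : ℕ in atTop, a ^ n ≤ C * b ^ n := by
  have hb : 0 < b := ha.trans_lt hab
  filter_upwards [(tendsto_pow_atTop_nhds_zero_of_lt_one (div_nonneg ha hb.le)
    ((div_lt_one hb).mpr hab)).eventually_le_const hC] with n hn
  rwa [div_pow, div_le_iff₀ (pow_pos hb n)] at hn

theorem eventually_hasZeroCountOn_pow_sub_at_zero {g h : ℂ → ℂ} {ρ : ℝ} {m : ℕ} (hm : 0 < m)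
    (hρ0 : 0 ≤ ρ) (hρ1 : ρ < 1) (hh : AnalyticAt ℂ h 0) (hh0 : h 0 ≠ 0)
    (hg : ∀ᶠ z in 𝓝 0, g z = z ^ m * h z) :
    ∀ᶠ n : ℕ in atTop,
      HasZeroCountOn (fun z => z ^ (2 * n) - g z) (closedBall 0 (ρ ^ ((2 * n : ℝ) / m))) m := by
  obtain ⟨R, hR, hball⟩ := Metric.eventually_nhds_iff_ball.mp
    (hg.and (hh.continuousAt.norm.eventually (lt_mem_nhds (half_lt_self (norm_pos_iff.mpr hh0)))))
  filter_upwards [(tendsto_rpow_two_mul_div hρ0 hρ1 hm).eventually_lt_const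
    (lt_min hR (lt_min one_pos (half_pos (norm_pos_iff.mpr hh0)))), eventually_gt_atTop m]
    with n hε hmn
  set ε := ρ ^ ((2 * n : ℝ) / m)
  obtain ⟨hεR, hε1, hεh⟩ : ε < R ∧ ε < 1 ∧ ε < ‖h 0‖ / 2 := by simpa only [lt_min_iff] using hε
  refine hasZeroCountOn_of_eq_pow_mul (v := fun z => z ^ (2 * n - m) - h z) hm
    (Real.rpow_nonneg hρ0 _) hεR (fun z hz => ?_) (by fun_prop) (fun z hz => ?_)
  · rw [(hball z hz).1, sub_zero, mul_sub, ← pow_add, Nat.add_sub_cancel' (by omega)]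
  · rw [mem_closedBall_zero_iff] at hz
    refine sub_ne_zero.mpr fun heq => (congrArg norm heq).not_lt ?_
    calc ‖z ^ (2 * n - m)‖ ≤ ‖z‖ ^ 1 := by
          rw [norm_pow]
          exact pow_le_pow_of_le_one (norm_nonneg z) (hz.trans hε1.le) (by omega)
      _ < ‖h 0‖ / 2 := by rw [pow_one]; exact hz.trans_lt hεh
      _ < ‖h z‖ := (hball z (mem_ball_zero_iff.mpr (hz.trans_lt hεR))).2

theorem hasZeroCountOn_pow_sub_of_cexp_eq {g h Λ H : ℂ → ℂ} {z0 : ℂ} {ε : ℝ} {m n : ℕ} (hm : 0 < m)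
    (hε : 0 < ε) (hg : ∀ z ∈ ball z0 (5 * ε), g z = (z - z0) ^ m * h z)
    (hΛ : AnalyticOnNhd ℂ Λ (ball z0 (5 * ε))) (hΛexp : ∀ z ∈ ball z0 (5 * ε), cexp (Λ z) = z)
    (hH : AnalyticOnNhd ℂ H (ball z0 (5 * ε))) (hHexp : ∀ z ∈ ball z0 (5 * ε), cexp (H z) = h z)
    (hbound : ∀ z ∈ ball z0 (5 * ε), ‖z‖ ^ (2 * n) ≤ ε ^ m * ‖h z‖) :
    HasZeroCountOn (fun z => z ^ (2 * n) - g z) (closedBall z0 ε) m := by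
  have hh0 : ∀ z ∈ ball z0 (5 * ε), h z ≠ 0 := fun z hz => hHexp z hz ▸ exp_ne_zero _
  set A := fun z => cexp (((2 * n : ℕ) * Λ z - H z) / m)
  have hApow : ∀ z ∈ ball z0 (5 * ε), A z ^ m = z ^ (2 * n) / h z := fun z hz => by
    rw [← exp_nat_mul, mul_div_cancel₀ _ (Nat.cast_ne_zero.mpr hm.ne'), exp_sub, exp_nat_mul,
      hΛexp z hz, hHexp z hz]
  refine hasZeroCountOn_mul_sub_pow_sub_pow_of_norm_le (u := fun z => -cexp (H z)) (A := A) hm hε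
    (fun z hz => ?_) (fun z hz => (hH z hz).cexp.neg) (fun z _ => neg_ne_zero.mpr (exp_ne_zero _))
    (fun z hz => (((analyticAt_const.mul (hΛ z hz)).sub (hH z hz)).div_const).cexp)
    (fun z _ => exp_ne_zero _) (fun z hz => ?_)
  · rw [hg z hz, hApow z hz, hHexp z hz]
    field_simp [hh0 z hz]
    ring
  · rw [← pow_le_pow_iff_left₀ (norm_nonneg _) hε.le hm.ne', ← norm_pow, hApow z hz, norm_div,
      norm_pow, div_le_iff₀ (norm_pos_iff.mpr (hh0 z hz))]
    exact hbound z hz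

theorem eventually_hasZeroCountOn_pow_sub_of_ne_zero {g h : ℂ → ℂ} {z0 : ℂ} {ρ : ℝ} {m : ℕ}
    (hm : 0 < m) (hz0 : z0 ≠ 0) (hρ1 : ‖z0‖ < ρ) (hρ2 : ρ < 1) (hh : AnalyticAt ℂ h z0)
    (hh0 : h z0 ≠ 0) (hg : ∀ᶠ z in 𝓝 z0, g z = (z - z0) ^ m * h z) :
    ∀ᶠ n : ℕ in atTop,
      HasZeroCountOn (fun z => z ^ (2 * n) - g z) (closedBall z0 (ρ ^ ((2 * n : ℝ) / m))) m := by
  obtain ⟨ρ', hz0ρ', hρ'ρ⟩ := exists_between hρ1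
  have hρ' : 0 ≤ ρ' := (norm_nonneg z0).trans hz0ρ'.le
  have hρ0 : 0 < ρ := hρ'.trans_lt hρ'ρ
  obtain ⟨R, hR, hball⟩ := Metric.eventually_nhds_iff_ball.mp
    (((hg.and hh.eventually_analyticAt).and
      (((hh.continuousAt.div_const (h z0)).eventually_mem
        (isOpen_slitPlane.mem_nhds (by simp [hh0]))).and
      (hh.continuousAt.norm.eventually (lt_mem_nhds (half_lt_self (norm_pos_iff.mpr hh0)))))).and
      (((continuousAt_id.div_const z0).eventually_mem
        (isOpen_slitPlane.mem_nhds (by simp [hz0]))).and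
      ((continuous_norm.tendsto z0).eventually_lt_const hz0ρ')))
  obtain ⟨Λ, hΛ, hΛexp⟩ := exists_analyticOnNhd_cexp_eq (f := id) (c := z0) analyticOnNhd_id
    fun z hz => (hball z hz).2.1
  obtain ⟨H, hH, hHexp⟩ := exists_analyticOnNhd_cexp_eq (c := z0) (fun z hz => (hball z hz).1.1.2)
    fun z hz => (hball z hz).1.2.1
  filter_upwards [(tendsto_rpow_two_mul_div hρ0.le hρ2 hm).eventually_le_const (by positivity :
    0 < R / 5), eventually_pow_le_mul_pow (pow_nonneg hρ' 2) (pow_lt_pow_left₀ hρ'ρ hρ' two_ne_zero)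
    (half_pos (norm_pos_iff.mpr hh0))] with n hεR hpow
  set ε := ρ ^ ((2 * n : ℝ) / m)
  have hsub : ball z0 (5 * ε) ⊆ ball z0 R := ball_subset_ball (by linarith)
  refine hasZeroCountOn_pow_sub_of_cexp_eq hm (Real.rpow_pos_of_pos hρ0 _)
    (fun z hz => (hball z (hsub hz)).1.1.1) (hΛ.mono hsub) (fun z hz => hΛexp z (hsub hz))
    (hH.mono hsub) (fun z hz => hHexp z (hsub hz)) fun z hz => ?_
  have hz := hball z (hsub hz)
  calc ‖z‖ ^ (2 * n) ≤ (ρ' ^ 2) ^ n := by rw [← pow_mul]; gcongr; exact hz.2.2.le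
    _ ≤ ‖h z0‖ / 2 * (ρ ^ 2) ^ n := hpow
    _ = ε ^ m * (‖h z0‖ / 2) := by rw [rpow_two_mul_div_pow hρ0.le hm.ne', pow_mul]; ring
    _ ≤ ε ^ m * ‖h z‖ := by gcongr; exact hz.1.2.2.le

theorem stmt_11_general (g : ℂ → ℂ) (z0 : ℂ)
    (ρ : ℝ) (hρ1 : ‖z0‖ < ρ) (hρ2 : ρ < 1)
    (m : ℕ) (hm : 0 < m)
    (hmult : ∃ hfun : ℂ → ℂ, AnalyticAt ℂ hfun z0 ∧ hfun z0 ≠ 0 ∧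
      ∀ᶠ z in nhds z0, g z = (z - z0) ^ m * hfun z) :
    ∃ M : ℝ, 0 < M ∧ ∃ n0 : ℕ, ∀ n : ℕ, n0 ≤ n →
      ∃ (S : Finset ℂ) (mult : ℂ → ℕ),
        (∀ z ∈ S, z ∈ closedBall z0 (M ^ (-(1 : ℝ) / m) * ρ ^ ((2 * n : ℝ) / m))) ∧
        (∀ z ∈ closedBall z0 (M ^ (-(1 : ℝ) / m) * ρ ^ ((2 * n : ℝ) / m)),
          (z ^ (2 * n) = g z ↔ z ∈ S)) ∧
        (∀ z ∈ S, 0 < mult z ∧ ∃ hz : ℂ → ℂ, AnalyticAt ℂ hz z ∧ hz z ≠ 0 ∧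
          ∀ᶠ w in nhds z, w ^ (2 * n) - g w = (w - z) ^ (mult z) * hz w) ∧
        ∑ z ∈ S, mult z = m := by
  obtain ⟨h, hh, hh0, hg⟩ := hmult
  have hev : ∀ᶠ n : ℕ in atTop, HasZeroCountOn (fun z => z ^ (2 * n) - g z)
      (closedBall z0 (ρ ^ ((2 * n : ℝ) / m))) m := by
    rcases eq_or_ne z0 0 with rfl | hz0
    · exact eventually_hasZeroCountOn_pow_sub_at_zero hm ((norm_nonneg _).trans hρ1.le) hρ2 hh
        hh0 (by simpa using hg)
    · exact eventually_hasZeroCountOn_pow_sub_of_ne_zero hm hz0 hρ1 hρ2 hh hh0 hg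
  obtain ⟨n0, hn0⟩ := eventually_atTop.mp hev
  refine ⟨1, one_pos, n0, fun n hn => ?_⟩
  obtain ⟨S, mult, hSK, hzero, hord, hsum⟩ := hn0 n hn
  simp only [Real.one_rpow, one_mul]
  exact ⟨S, mult, hSK, fun z hz => sub_eq_zero.symm.trans (hzero z hz), hord, hsum⟩

theorem stmt_11 (g : ℂ → ℂ) (z0 : ℂ) (hz0 : ‖z0‖ < 1)
    (ρ : ℝ) (hρ1 : ‖z0‖ < ρ) (hρ2 : ρ < 1)
    (m : ℕ) (hm : 0 < m)
    (U : Set ℂ) (hU : U ∈ nhds z0) (hgU : DifferentiableOn ℂ g U)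
    (hmult : ∃ hfun : ℂ → ℂ, AnalyticAt ℂ hfun z0 ∧ hfun z0 ≠ 0 ∧
      ∀ᶠ z in nhds z0, g z = (z - z0) ^ m * hfun z) :
    ∃ M : ℝ, 0 < M ∧ ∃ n0 : ℕ, ∀ n : ℕ, n0 ≤ n →
      ∃ (S : Finset ℂ) (mult : ℂ → ℕ),
        (∀ z ∈ S, z ∈ closedBall z0 (M ^ (-(1 : ℝ) / m) * ρ ^ ((2 * n : ℝ) / m))) ∧
        (∀ z ∈ closedBall z0 (M ^ (-(1 : ℝ) / m) * ρ ^ ((2 * n : ℝ) / m)),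
          (z ^ (2 * n) = g z ↔ z ∈ S)) ∧
        (∀ z ∈ S, 0 < mult z ∧ ∃ hz : ℂ → ℂ, AnalyticAt ℂ hz z ∧ hz z ≠ 0 ∧
          ∀ᶠ w in nhds z, w ^ (2 * n) - g w = (w - z) ^ (mult z) * hz w) ∧
        ∑ z ∈ S, mult z = m :=
  stmt_11_general g z0 ρ hρ1 hρ2 m hm hmult
end
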